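/- Let D₁ and D₂ be open domains in ℂ(i₁) and let (F, G) be an i₂e-generating pair on D₀ = D₁ ×_e D₂. If w_{e1} : D₁ → ℂ(i₁) is an (F_{e1}, G_{e1})-pseudoanalytic function on D₁ and w_{e2} : D₂ → ℂ(i₁) is an (F_{e2}, G_{e2})-pseudoanalytic function on D₂, then the function w : D₁ ×_e D₂ → 𝕋 defined by w(z₁ + z₂i₂) = w_{e1}(z₁ − z₂i₁)e₁ + w_{e2}(z₁ + z₂i₁)e₂ is (F,G)_j-pseudoanalytic on D₁ ×_e D₂, and ẇ(z₁ + z₂i₂) = ẇ_{e1}(z₁ − z₂i₁)e₁ + ẇ_{e2}(z₁ + z₂i₁)e₂ for all z₁ + z₂i₂ ∈ D₁ ×_e D₂. -/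

import Mathlib

noncomputable section

open Complex Filter Topology

/-- The bicomplex numbers `𝕋 = {z₁ + z₂ i₂ : z₁, z₂ ∈ ℂ(i₁)}`, represented by the pair
of `ℂ(i₁)`-components `(z₁, z₂)`. -/
@[ext] structure Bicomplex : Type where
  z1 : ℂ
  z2 : ℂ

namespace Bicomplex

instance : Zero Bicomplex := ⟨⟨0, 0⟩⟩
instance : One Bicomplex := ⟨⟨1, 0⟩⟩
instance : Add Bicomplex := ⟨fun w v => ⟨w.z1 + v.z1, w.z2 + v.z2⟩⟩
instance : Neg Bicomplex := ⟨fun w => ⟨-w.z1, -w.z2⟩⟩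
instance : Mul Bicomplex := ⟨fun w v => ⟨w.z1 * v.z1 - w.z2 * v.z2, w.z1 * v.z2 + w.z2 * v.z1⟩⟩

@[simp] lemma zero_z1 : (0 : Bicomplex).z1 = 0 := rfl
@[simp] lemma zero_z2 : (0 : Bicomplex).z2 = 0 := rfl
@[simp] lemma one_z1 : (1 : Bicomplex).z1 = 1 := rfl
@[simp] lemma one_z2 : (1 : Bicomplex).z2 = 0 := rfl
@[simp] lemma add_z1 (w v : Bicomplex) : (w + v).z1 = w.z1 + v.z1 := rfl
@[simp] lemma add_z2 (w v : Bicomplex) : (w + v).z2 = w.z2 + v.z2 := rfl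
@[simp] lemma neg_z1 (w : Bicomplex) : (-w).z1 = -w.z1 := rfl
@[simp] lemma neg_z2 (w : Bicomplex) : (-w).z2 = -w.z2 := rfl
@[simp] lemma mul_z1 (w v : Bicomplex) : (w * v).z1 = w.z1 * v.z1 - w.z2 * v.z2 := rfl
@[simp] lemma mul_z2 (w v : Bicomplex) : (w * v).z2 = w.z1 * v.z2 + w.z2 * v.z1 := rfl

/-- The bicomplex numbers form a commutative ring. -/
instance : CommRing Bicomplex where
  nsmul n w := ⟨n • w.z1, n • w.z2⟩
  zsmul n w := ⟨n • w.z1, n • w.z2⟩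
  nsmul_zero a := by ext <;> exact zero_smul _ _
  nsmul_succ n a := by ext <;> exact succ_nsmul _ _
  zsmul_zero' a := by ext <;> exact zero_smul _ _
  zsmul_succ' n a := by ext <;> exact SubNegMonoid.zsmul_succ' _ _
  zsmul_neg' n a := by ext <;> exact SubNegMonoid.zsmul_neg' _ _
  add_assoc a b c := by ext <;> simp <;> ring
  zero_add a := by ext <;> simp
  add_zero a := by ext <;> simp
  add_comm a b := by ext <;> simp <;> ring
  neg_add_cancel a := by ext <;> simp
  mul_assoc a b c := by ext <;> simp <;> ring
  one_mul a := by ext <;> simp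
  mul_one a := by ext <;> simp
  left_distrib a b c := by ext <;> simp <;> ring
  right_distrib a b c := by ext <;> simp <;> ring
  zero_mul a := by ext <;> simp
  mul_zero a := by ext <;> simp
  mul_comm a b := by ext <;> simp <;> ring

/-- Inverse: `w⁻¹ = w†₂ / (z₁² + z₂²)` (junk value `0/0` on the null-cone). -/
instance : Inv Bicomplex :=
  ⟨fun w => ⟨w.z1 / (w.z1 ^ 2 + w.z2 ^ 2), -w.z2 / (w.z1 ^ 2 + w.z2 ^ 2)⟩⟩

instance : Div Bicomplex := ⟨fun w v => w * v⁻¹⟩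

/-- Embedding of `ℂ(i₁)` into `𝕋`. -/
def ofComplex (c : ℂ) : Bicomplex := ⟨c, 0⟩

/-- Embedding of `ℝ` into `𝕋`. -/
def ofReal (t : ℝ) : Bicomplex := ⟨(t : ℂ), 0⟩

/-- The imaginary unit `i₁`. -/
def i1 : Bicomplex := ⟨Complex.I, 0⟩

/-- The imaginary unit `i₂`. -/
def i2 : Bicomplex := ⟨0, 1⟩

/-- The hyperbolic unit `j = i₁ i₂`. -/
def jj : Bicomplex := ⟨0, Complex.I⟩

/-- The idempotent `e₁ = (1 + j)/2`. -/
def e1 : Bicomplex := ⟨1 / 2, Complex.I / 2⟩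

/-- The idempotent `e₂ = (1 - j)/2`. -/
def e2 : Bicomplex := ⟨1 / 2, -(Complex.I) / 2⟩

/-- The projection `P₁(z₁ + z₂ i₂) = z₁ - z₂ i₁`. -/
def P1 (w : Bicomplex) : ℂ := w.z1 - w.z2 * Complex.I

/-- The projection `P₂(z₁ + z₂ i₂) = z₁ + z₂ i₁`. -/
def P2 (w : Bicomplex) : ℂ := w.z1 + w.z2 * Complex.I

/-- The conjugation `w†₁ = z̄₁ + z̄₂ i₂`. -/
def dag1 (w : Bicomplex) : Bicomplex := ⟨(starRingEnd ℂ) w.z1, (starRingEnd ℂ) w.z2⟩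

/-- The conjugation `w†₂ = z₁ - z₂ i₂`. -/
def dag2 (w : Bicomplex) : Bicomplex := ⟨w.z1, -w.z2⟩

/-- The conjugation `w†₃ = z̄₁ - z̄₂ i₂`. -/
def dag3 (w : Bicomplex) : Bicomplex := ⟨(starRingEnd ℂ) w.z1, -((starRingEnd ℂ) w.z2)⟩

/-- `𝕋` as `ℂ × ℂ`. -/
def toProd (w : Bicomplex) : ℂ × ℂ := (w.z1, w.z2)

/-- `ℂ × ℂ` as `𝕋`. -/
def ofProd (p : ℂ × ℂ) : Bicomplex := ⟨p.1, p.2⟩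

instance : TopologicalSpace Bicomplex := TopologicalSpace.induced toProd inferInstance

/-- The set of points `w` such that `w - w₀` is invertible (i.e. not a zero divisor). -/
def invertibleDiff (w₀ : Bicomplex) : Set Bicomplex :=
  {w | (w - w₀).z1 ^ 2 + (w - w₀).z2 ^ 2 ≠ 0}

/-- `f` is `𝕋`-differentiable at `w₀` with derivative `d`:
`(f w - f w₀)/(w - w₀) → d` as `w → w₀` with `w - w₀` invertible. -/
def HasTDerivAt (f : Bicomplex → Bicomplex) (d w₀ : Bicomplex) : Prop :=
  Tendsto (fun w => (f w - f w₀) / (w - w₀)) (𝓝[invertibleDiff w₀] w₀) (𝓝 d)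

/-- `f` is `𝕋`-holomorphic on `U` if it is `𝕋`-differentiable at each point of `U`. -/
def THolomorphicOn (f : Bicomplex → Bicomplex) (U : Set Bicomplex) : Prop :=
  ∀ w ∈ U, ∃ d, HasTDerivAt f d w

/-- `f` viewed as a map `ℂ² → ℂ²`. -/
def fProd (f : Bicomplex → Bicomplex) : ℂ × ℂ → ℂ × ℂ := fun p => toProd (f (ofProd p))

/-- `f : 𝕋 → 𝕋` is `n` times continuously (real-)differentiable on `U`. -/
def TContDiffOn (n : ℕ∞) (f : Bicomplex → Bicomplex) (U : Set Bicomplex) : Prop :=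
  ContDiffOn ℝ n (fProd f) (toProd '' U)

/-- `g : 𝕋 → ℂ` is `n` times continuously (real-)differentiable on `U`. -/
def CContDiffOn (n : ℕ∞) (g : Bicomplex → ℂ) (U : Set Bicomplex) : Prop :=
  ContDiffOn ℝ n (fun p => g (ofProd p)) (toProd '' U)

/-- Real partial derivative of `g : 𝕋 → ℂ` at `w` in direction `e`. -/
def pd (e : Bicomplex) (g : Bicomplex → ℂ) (w : Bicomplex) : ℂ :=
  deriv (fun t : ℝ => g (w + ofReal t * e)) 0

/-- Existence of the real partial derivative of `g : 𝕋 → ℂ` at `w` in direction `e`. -/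
def pdExists (e : Bicomplex) (g : Bicomplex → ℂ) (w : Bicomplex) : Prop :=
  DifferentiableAt ℝ (fun t : ℝ => g (w + ofReal t * e)) 0

/-- The scalar (`ℂ(i₁)`-) component `f₁` of `f = f₁ + f₂ i₂`. -/
def s1 (f : Bicomplex → Bicomplex) : Bicomplex → ℂ := fun w => (f w).z1

/-- The vectorial (`ℂ(i₁)`-) component `f₂` of `f = f₁ + f₂ i₂`. -/
def s2 (f : Bicomplex → Bicomplex) : Bicomplex → ℂ := fun w => (f w).z2

/-- Real partial derivative of `f : 𝕋 → 𝕋` in direction `e`. -/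
def pdT (e : Bicomplex) (f : Bicomplex → Bicomplex) : Bicomplex → Bicomplex :=
  fun w => ⟨pd e (s1 f) w, pd e (s2 f) w⟩

/-- Existence of the real partial derivative of `f : 𝕋 → 𝕋` in direction `e`. -/
def pdTExists (e : Bicomplex) (f : Bicomplex → Bicomplex) (w : Bicomplex) : Prop :=
  pdExists e (s1 f) w ∧ pdExists e (s2 f) w

/-- `∂_{z₁} g = ½(∂ₓ g - i₁ ∂_y g)` for `g : 𝕋 → ℂ`. -/
def dz1 (g : Bicomplex → ℂ) : Bicomplex → ℂ :=
  fun w => (pd 1 g w - Complex.I * pd i1 g w) / 2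

/-- `∂_{z̄₁} g = ½(∂ₓ g + i₁ ∂_y g)` for `g : 𝕋 → ℂ`. -/
def dz1bar (g : Bicomplex → ℂ) : Bicomplex → ℂ :=
  fun w => (pd 1 g w + Complex.I * pd i1 g w) / 2

/-- `∂_{z₂} g = ½(∂_p g - i₁ ∂_q g)` for `g : 𝕋 → ℂ`. -/
def dz2 (g : Bicomplex → ℂ) : Bicomplex → ℂ :=
  fun w => (pd i2 g w - Complex.I * pd jj g w) / 2

/-- `∂_{z̄₂} g = ½(∂_p g + i₁ ∂_q g)` for `g : 𝕋 → ℂ`. -/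
def dz2bar (g : Bicomplex → ℂ) : Bicomplex → ℂ :=
  fun w => (pd i2 g w + Complex.I * pd jj g w) / 2

/-- `∂_{z₁}` applied componentwise to `f : 𝕋 → 𝕋`. -/
def dZ1 (f : Bicomplex → Bicomplex) : Bicomplex → Bicomplex :=
  fun w => ⟨dz1 (s1 f) w, dz1 (s2 f) w⟩

/-- `∂_{z₂}` applied componentwise to `f : 𝕋 → 𝕋`. -/
def dZ2 (f : Bicomplex → Bicomplex) : Bicomplex → Bicomplex :=
  fun w => ⟨dz2 (s1 f) w, dz2 (s2 f) w⟩

/-- `∂_{z̄₁}` applied componentwise to `f : 𝕋 → 𝕋`. -/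
def dZ1bar (f : Bicomplex → Bicomplex) : Bicomplex → Bicomplex :=
  fun w => ⟨dz1bar (s1 f) w, dz1bar (s2 f) w⟩

/-- `∂_{z̄₂}` applied componentwise to `f : 𝕋 → 𝕋`. -/
def dZ2bar (f : Bicomplex → Bicomplex) : Bicomplex → Bicomplex :=
  fun w => ⟨dz2bar (s1 f) w, dz2bar (s2 f) w⟩

/-- `∂_ω = ½(∂_{z₁} - i₂ ∂_{z₂})`. -/
def dOm (f : Bicomplex → Bicomplex) : Bicomplex → Bicomplex :=
  fun w => ofComplex (1 / 2) * (dZ1 f w - i2 * dZ2 f w)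

/-- `∂_{ω†₂} = ∂_ω̄ = ½(∂_{z₁} + i₂ ∂_{z₂})`. -/
def dOmBar (f : Bicomplex → Bicomplex) : Bicomplex → Bicomplex :=
  fun w => ofComplex (1 / 2) * (dZ1 f w + i2 * dZ2 f w)

/-- `∂_{ω†₁} = ½(∂_{z̄₁} - i₂ ∂_{z̄₂})`. -/
def dOmDag1 (f : Bicomplex → Bicomplex) : Bicomplex → Bicomplex :=
  fun w => ofComplex (1 / 2) * (dZ1bar f w - i2 * dZ2bar f w)

/-- `∂_{ω†₃} = ½(∂_{z̄₁} + i₂ ∂_{z̄₂})`. -/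
def dOmDag3 (f : Bicomplex → Bicomplex) : Bicomplex → Bicomplex :=
  fun w => ofComplex (1 / 2) * (dZ1bar f w + i2 * dZ2bar f w)

/-- The complexified Laplacian `Δ_ℂ = ∂²_{z₁} + ∂²_{z₂}` acting on `ℂ(i₁)`-valued functions. -/
def lapC (g : Bicomplex → ℂ) : Bicomplex → ℂ :=
  fun w => dz1 (dz1 g) w + dz2 (dz2 g) w

/-- The vector part in the `i₂`-representation `w = ζ₁ + ζ₂ i₁` with `ζ₁, ζ₂ ∈ ℂ(i₂)`:
for `w = x₁ + x₂i₁ + x₃i₂ + x₄j`, `Vec(w) = x₂ + x₄ i₂`, encoded as the complex number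
`x₂ + x₄ i`. -/
def vec2 (w : Bicomplex) : ℂ := ⟨w.z1.im, w.z2.im⟩

/-- Embedding of `ℂ(i₂)` into `𝕋`: the complex number `a + b i` represents `a + b i₂`. -/
def ofC2 (c : ℂ) : Bicomplex := ⟨(c.re : ℂ), (c.im : ℂ)⟩

/-- Multiplication of hyperbolic numbers `ℂ(j) = {x + yj}`, encoded as pairs in `ℝ × ℝ`. -/
def hmul (a b : ℝ × ℝ) : ℝ × ℝ := (a.1 * b.1 + a.2 * b.2, a.1 * b.2 + a.2 * b.1)

/-- Division of hyperbolic numbers (junk value when the denominator is a zero divisor). -/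
def hdiv (a b : ℝ × ℝ) : ℝ × ℝ :=
  hmul a (b.1 / (b.1 ^ 2 - b.2 ^ 2), -b.2 / (b.1 ^ 2 - b.2 ^ 2))

/-- Embedding of the hyperbolic numbers `ℂ(j)` into `𝕋`: `(x, y) ↦ x + y j`. -/
def ofHyp (a : ℝ × ℝ) : Bicomplex := ⟨(a.1 : ℂ), (a.2 : ℂ) * Complex.I⟩

/-- The vector part in the `j`-representation `w = ζ₁ + ζ₂ i₁` with `ζ₁, ζ₂ ∈ ℂ(j)`:
for `w = x₁ + x₂i₁ + x₃i₂ + x₄j`, `Vec(w) = x₂ - x₃ j`, encoded as the pair `(x₂, -x₃)`. -/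
def vec3 (w : Bicomplex) : ℝ × ℝ := (w.z1.im, -w.z2.re)

/-- The `𝕋`-cartesian set `X₁ ×ₑ X₂ = {w : P₁ w ∈ X₁ ∧ P₂ w ∈ X₂}`. -/
def eProd (X₁ X₂ : Set ℂ) : Set Bicomplex := {w | P1 w ∈ X₁ ∧ P2 w ∈ X₂}

/-- `(F, G)` is an `i₁`-generating pair on `D`. -/
def GenPair1 (F G : Bicomplex → Bicomplex) (D : Set Bicomplex) : Prop :=
  TContDiffOn 2 F D ∧ TContDiffOn 2 G D ∧ ∀ w ∈ D, (dag2 (F w) * G w).z2 ≠ 0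

/-- `(F, G)` is an `i₂`-generating pair on `D`. -/
def GenPair2 (F G : Bicomplex → Bicomplex) (D : Set Bicomplex) : Prop :=
  TContDiffOn 2 F D ∧ TContDiffOn 2 G D ∧ ∀ w ∈ D, vec2 (dag1 (F w) * G w) ≠ 0

/-- `(F, G)` is a `j`-generating pair on `D`. -/
def GenPairJ (F G : Bicomplex → Bicomplex) (D : Set Bicomplex) : Prop :=
  TContDiffOn 2 F D ∧ TContDiffOn 2 G D ∧ ∀ w ∈ D, vec3 (dag3 (F w) * G w) ≠ 0

/-- The unique `λ₀ ∈ ℂ(i₁)` with `w(ω₀) = λ₀ F(ω₀) + μ₀ G(ω₀)`. -/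
def lam1 (F G wf : Bicomplex → Bicomplex) (ω₀ : Bicomplex) : ℂ :=
  (dag2 (wf ω₀) * G ω₀).z2 / (dag2 (F ω₀) * G ω₀).z2

/-- The unique `μ₀ ∈ ℂ(i₁)` with `w(ω₀) = λ₀ F(ω₀) + μ₀ G(ω₀)`. -/
def mu1 (F G wf : Bicomplex → Bicomplex) (ω₀ : Bicomplex) : ℂ :=
  -((dag2 (wf ω₀) * F ω₀).z2 / (dag2 (F ω₀) * G ω₀).z2)

/-- `w` has `(F,G)_{i₁}`-derivative `d` at `ω₀`. -/
def HasFGDeriv1 (F G wf : Bicomplex → Bicomplex) (d ω₀ : Bicomplex) : Prop :=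
  Tendsto
    (fun ω => (wf ω - ofComplex (lam1 F G wf ω₀) * F ω - ofComplex (mu1 F G wf ω₀) * G ω)
        / (ω - ω₀))
    (𝓝[invertibleDiff ω₀] ω₀) (𝓝 d)

/-- The unique `λ₀ ∈ ℂ(j)` with `w(ω₀) = λ₀ F(ω₀) + μ₀ G(ω₀)`. -/
def lamJ (F G wf : Bicomplex → Bicomplex) (ω₀ : Bicomplex) : ℝ × ℝ :=
  hdiv (vec3 (dag3 (wf ω₀) * G ω₀)) (vec3 (dag3 (F ω₀) * G ω₀))

/-- The unique `μ₀ ∈ ℂ(j)` with `w(ω₀) = λ₀ F(ω₀) + μ₀ G(ω₀)`. -/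
def muJ (F G wf : Bicomplex → Bicomplex) (ω₀ : Bicomplex) : ℝ × ℝ :=
  -(hdiv (vec3 (dag3 (wf ω₀) * F ω₀)) (vec3 (dag3 (F ω₀) * G ω₀)))

/-- `w` has `(F,G)_j`-derivative `d` at `ω₀`. -/
def HasFGDerivJ (F G wf : Bicomplex → Bicomplex) (d ω₀ : Bicomplex) : Prop :=
  Tendsto
    (fun ω => (wf ω - ofHyp (lamJ F G wf ω₀) * F ω - ofHyp (muJ F G wf ω₀) * G ω) / (ω - ω₀))
    (𝓝[invertibleDiff ω₀] ω₀) (𝓝 d)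

/-- `w` is `(F,G)_j`-pseudoanalytic on `D`. -/
def PseudoanalyticJ (F G wf : Bicomplex → Bicomplex) (D : Set Bicomplex) : Prop :=
  ∀ ω ∈ D, ∃ d, HasFGDerivJ F G wf d ω

/-- `w` has continuous partial derivatives in a neighborhood of `ω₀`. -/
def HasContPartialsNear (f : Bicomplex → Bicomplex) (w₀ : Bicomplex) : Prop :=
  ∃ V ∈ 𝓝 w₀, ∀ e ∈ ({1, i1, i2, jj} : Set Bicomplex),
    (∀ w ∈ V, pdTExists e f w) ∧ ContinuousOn (pdT e f) V

/-! Characteristic coefficients with respect to the `†₂` conjugation (`i₁` case). -/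

def denom2 (F G : Bicomplex → Bicomplex) (w : Bicomplex) : Bicomplex :=
  F w * dag2 (G w) - dag2 (F w) * G w

def aCoef2₁ (F G : Bicomplex → Bicomplex) (w : Bicomplex) : Bicomplex :=
  -((dag1 (F w) * dOmDag1 G w - dOmDag1 F w * dag1 (G w)) / denom2 F G w)

def bCoef2₁ (F G : Bicomplex → Bicomplex) (w : Bicomplex) : Bicomplex :=
  (F w * dOmDag1 G w - dOmDag1 F w * G w) / denom2 F G w

def aCoef2₂ (F G : Bicomplex → Bicomplex) (w : Bicomplex) : Bicomplex :=
  -((dag2 (F w) * dOmBar G w - dOmBar F w * dag2 (G w)) / denom2 F G w)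

def bCoef2₂ (F G : Bicomplex → Bicomplex) (w : Bicomplex) : Bicomplex :=
  (F w * dOmBar G w - dOmBar F w * G w) / denom2 F G w

def aCoef2₃ (F G : Bicomplex → Bicomplex) (w : Bicomplex) : Bicomplex :=
  -((dag3 (F w) * dOmDag3 G w - dOmDag3 F w * dag3 (G w)) / denom2 F G w)

def bCoef2₃ (F G : Bicomplex → Bicomplex) (w : Bicomplex) : Bicomplex :=
  (F w * dOmDag3 G w - dOmDag3 F w * G w) / denom2 F G w

def Acoef2 (F G : Bicomplex → Bicomplex) (w : Bicomplex) : Bicomplex :=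
  -((dag2 (F w) * dOm G w - dOm F w * dag2 (G w)) / denom2 F G w)

def Bcoef2 (F G : Bicomplex → Bicomplex) (w : Bicomplex) : Bicomplex :=
  (F w * dOm G w - dOm F w * G w) / denom2 F G w

/-! Characteristic coefficients with respect to the `†₃` conjugation (`j` case). -/

def denom3 (F G : Bicomplex → Bicomplex) (w : Bicomplex) : Bicomplex :=
  F w * dag3 (G w) - dag3 (F w) * G w

def aCoef3₁ (F G : Bicomplex → Bicomplex) (w : Bicomplex) : Bicomplex :=
  -((dag1 (F w) * dOmDag1 G w - dOmDag1 F w * dag1 (G w)) / denom3 F G w)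

def bCoef3₁ (F G : Bicomplex → Bicomplex) (w : Bicomplex) : Bicomplex :=
  (F w * dOmDag1 G w - dOmDag1 F w * G w) / denom3 F G w

def aCoef3₂ (F G : Bicomplex → Bicomplex) (w : Bicomplex) : Bicomplex :=
  -((dag2 (F w) * dOmBar G w - dOmBar F w * dag2 (G w)) / denom3 F G w)

def bCoef3₂ (F G : Bicomplex → Bicomplex) (w : Bicomplex) : Bicomplex :=
  (F w * dOmBar G w - dOmBar F w * G w) / denom3 F G w

def aCoef3₃ (F G : Bicomplex → Bicomplex) (w : Bicomplex) : Bicomplex :=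
  -((dag3 (F w) * dOmDag3 G w - dOmDag3 F w * dag3 (G w)) / denom3 F G w)

def bCoef3₃ (F G : Bicomplex → Bicomplex) (w : Bicomplex) : Bicomplex :=
  (F w * dOmDag3 G w - dOmDag3 F w * G w) / denom3 F G w

def Acoef3 (F G : Bicomplex → Bicomplex) (w : Bicomplex) : Bicomplex :=
  -((dag3 (F w) * dOm G w - dOm F w * dag3 (G w)) / denom3 F G w)

def Bcoef3 (F G : Bicomplex → Bicomplex) (w : Bicomplex) : Bicomplex :=
  (F w * dOm G w - dOm F w * G w) / denom3 F G w

/-! Classical (Bers) pseudoanalytic function theory in `ℂ(i₁)`. -/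

/-- A complex (in `i₁`) generating pair on `D ⊆ ℂ(i₁)`. -/
def ComplexGenPair (Fe Ge : ℂ → ℂ) (D : Set ℂ) : Prop :=
  ContDiffOn ℝ 2 Fe D ∧ ContDiffOn ℝ 2 Ge D ∧
    ∀ z ∈ D, ((starRingEnd ℂ) (Fe z) * Ge z).im ≠ 0

/-- The unique real `λ₀` with `w(z₀) = λ₀ F(z₀) + μ₀ G(z₀)`. -/
def lamBers (Fe Ge we : ℂ → ℂ) (z₀ : ℂ) : ℝ :=
  ((starRingEnd ℂ) (we z₀) * Ge z₀).im / ((starRingEnd ℂ) (Fe z₀) * Ge z₀).im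

/-- The unique real `μ₀` with `w(z₀) = λ₀ F(z₀) + μ₀ G(z₀)`. -/
def muBers (Fe Ge we : ℂ → ℂ) (z₀ : ℂ) : ℝ :=
  -(((starRingEnd ℂ) (we z₀) * Fe z₀).im / ((starRingEnd ℂ) (Fe z₀) * Ge z₀).im)

/-- `w_e` has Bers `(F_e,G_e)`-derivative `d` at `z₀`. -/
def HasBersDerivAt (Fe Ge we : ℂ → ℂ) (d z₀ : ℂ) : Prop :=
  Tendsto
    (fun z => (we z - (lamBers Fe Ge we z₀ : ℂ) * Fe z - (muBers Fe Ge we z₀ : ℂ) * Ge z)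
        / (z - z₀))
    (𝓝[≠] z₀) (𝓝 d)

/-- `w_e` is `(F_e,G_e)`-pseudoanalytic (in the sense of Bers) on `D`. -/
def BersPseudoanalyticOn (Fe Ge we : ℂ → ℂ) (D : Set ℂ) : Prop :=
  ∀ z ∈ D, ∃ d, HasBersDerivAt Fe Ge we d z

/-- `∂_z̄ = ½(∂ₓ + i ∂_y)` for functions `ℂ(i₁) → ℂ(i₁)`. -/
def dzbarC (g : ℂ → ℂ) (z : ℂ) : ℂ :=
  (deriv (fun t : ℝ => g (z + t)) 0 + Complex.I * deriv (fun t : ℝ => g (z + t * Complex.I)) 0) / 2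

/-- The Bers characteristic coefficient `a_{(F_e,G_e)}`. -/
def aBers (Fe Ge : ℂ → ℂ) (z : ℂ) : ℂ :=
  -(((starRingEnd ℂ) (Fe z) * dzbarC Ge z - dzbarC Fe z * (starRingEnd ℂ) (Ge z)) /
    (Fe z * (starRingEnd ℂ) (Ge z) - (starRingEnd ℂ) (Fe z) * Ge z))

/-- The Bers characteristic coefficient `b_{(F_e,G_e)}`. -/
def bBers (Fe Ge : ℂ → ℂ) (z : ℂ) : ℂ :=
  (Fe z * dzbarC Ge z - dzbarC Fe z * Ge z) /
    (Fe z * (starRingEnd ℂ) (Ge z) - (starRingEnd ℂ) (Fe z) * Ge z)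

/-- `(F, G)` is the `i₂e`-generating pair associated to complex generating pairs
`(F_{e1}, G_{e1})` on `D₁` and `(F_{e2}, G_{e2})` on `D₂`. -/
def I2eGenPair (Fe1 Ge1 Fe2 Ge2 : ℂ → ℂ) (D₁ D₂ : Set ℂ)
    (F G : Bicomplex → Bicomplex) : Prop :=
  ComplexGenPair Fe1 Ge1 D₁ ∧ ComplexGenPair Fe2 Ge2 D₂ ∧
  (∀ w, F w = ofComplex (Fe1 (P1 w)) * e1 + ofComplex (Fe2 (P2 w)) * e2) ∧
  (∀ w, G w = ofComplex (Ge1 (P1 w)) * e1 + ofComplex (Ge2 (P2 w)) * e2)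

end Bicomplex

open Bicomplex

/-!
The projections `P1`, `P2` onto the idempotent components are ring homomorphisms `𝕋 → ℂ(i₁)`,
and `ω - ω₀` is invertible exactly when both `P1 ω ≠ P1 ω₀` and `P2 ω ≠ P2 ω₀`; so the
admissible approach `ω → ω₀` projects onto punctured approaches `P_k ω → P_k ω₀`. The
hyperbolic coefficients `λ₀, μ₀ ∈ ℂ(j)` project to the real Bers coefficients of the
components, hence `P_k` of the `(F,G)_j` difference quotient of `w` is the Bers difference
quotient of `w_{ek}`, and convergence in `𝕋` is convergence of both projections.
-/

namespace Bicomplex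

@[simp] lemma P1_add (u v : Bicomplex) : P1 (u + v) = P1 u + P1 v := by
  simp only [P1, add_z1, add_z2]; ring

@[simp] lemma P2_add (u v : Bicomplex) : P2 (u + v) = P2 u + P2 v := by
  simp only [P2, add_z1, add_z2]; ring

@[simp] lemma P1_neg (u : Bicomplex) : P1 (-u) = -P1 u := by
  simp only [P1, neg_z1, neg_z2]; ring

@[simp] lemma P2_neg (u : Bicomplex) : P2 (-u) = -P2 u := by
  simp only [P2, neg_z1, neg_z2]; ring

@[simp] lemma P1_sub (u v : Bicomplex) : P1 (u - v) = P1 u - P1 v := by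
  rw [sub_eq_add_neg, P1_add, P1_neg, sub_eq_add_neg]

@[simp] lemma P2_sub (u v : Bicomplex) : P2 (u - v) = P2 u - P2 v := by
  rw [sub_eq_add_neg, P2_add, P2_neg, sub_eq_add_neg]

@[simp] lemma P1_mul (u v : Bicomplex) : P1 (u * v) = P1 u * P1 v := by
  simp only [P1, mul_z1, mul_z2]; ring_nf; rw [I_sq]; ring

@[simp] lemma P2_mul (u v : Bicomplex) : P2 (u * v) = P2 u * P2 v := by
  simp only [P2, mul_z1, mul_z2]; ring_nf; rw [I_sq]; ring

lemma P1_mul_P2 (v : Bicomplex) : P1 v * P2 v = v.z1 ^ 2 + v.z2 ^ 2 := by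
  simp only [P1, P2]; ring_nf; rw [I_sq]; ring

lemma P1_inv {v : Bicomplex} (hv : v.z1 ^ 2 + v.z2 ^ 2 ≠ 0) : P1 v⁻¹ = (P1 v)⁻¹ := by
  rw [← P1_mul_P2] at hv
  change v.z1 / _ - -v.z2 / _ * I = _
  rw [← P1_mul_P2]
  field_simp [left_ne_zero_of_mul hv, right_ne_zero_of_mul hv]
  simp only [P2]; ring

lemma P2_inv {v : Bicomplex} (hv : v.z1 ^ 2 + v.z2 ^ 2 ≠ 0) : P2 v⁻¹ = (P2 v)⁻¹ := by
  rw [← P1_mul_P2] at hv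
  change v.z1 / _ + -v.z2 / _ * I = _
  rw [← P1_mul_P2]
  field_simp [left_ne_zero_of_mul hv, right_ne_zero_of_mul hv]
  simp only [P1]; ring

lemma P1_div (u : Bicomplex) {v : Bicomplex} (hv : v.z1 ^ 2 + v.z2 ^ 2 ≠ 0) :
    P1 (u / v) = P1 u / P1 v :=
  (P1_mul u v⁻¹).trans (by rw [P1_inv hv, div_eq_mul_inv])

lemma P2_div (u : Bicomplex) {v : Bicomplex} (hv : v.z1 ^ 2 + v.z2 ^ 2 ≠ 0) :
    P2 (u / v) = P2 u / P2 v :=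
  (P2_mul u v⁻¹).trans (by rw [P2_inv hv, div_eq_mul_inv])

lemma P1_idempotent_decomp (c₁ c₂ : ℂ) : P1 (ofComplex c₁ * e1 + ofComplex c₂ * e2) = c₁ := by
  simp only [P1, ofComplex, e1, e2, mul_z1, mul_z2, add_z1, add_z2]; ring_nf; rw [I_sq]; ring

lemma P2_idempotent_decomp (c₁ c₂ : ℂ) : P2 (ofComplex c₁ * e1 + ofComplex c₂ * e2) = c₂ := by
  simp only [P2, ofComplex, e1, e2, mul_z1, mul_z2, add_z1, add_z2]; ring_nf; rw [I_sq]; ring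

@[simp] lemma P1_dag3 (v : Bicomplex) : P1 (dag3 v) = starRingEnd ℂ (P1 v) := by
  simp only [P1, dag3, map_sub, map_mul, conj_I]; ring

@[simp] lemma P2_dag3 (v : Bicomplex) : P2 (dag3 v) = starRingEnd ℂ (P2 v) := by
  simp only [P2, dag3, map_add, map_mul, conj_I]; ring

lemma mem_invertibleDiff_iff {ω ω₀ : Bicomplex} :
    ω ∈ invertibleDiff ω₀ ↔ P1 ω ≠ P1 ω₀ ∧ P2 ω ≠ P2 ω₀ := by
  rw [invertibleDiff, Set.mem_ofPred_eq, ← P1_mul_P2, mul_ne_zero_iff, P1_sub, P2_sub,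
    sub_ne_zero, sub_ne_zero]

lemma z1_eq_P1_add_P2 (v : Bicomplex) : v.z1 = (P1 v + P2 v) / 2 := by
  simp only [P1, P2]; ring

lemma z2_eq_P2_sub_P1 (v : Bicomplex) : v.z2 = (P2 v - P1 v) / (2 * I) := by
  simp only [P1, P2]; field_simp; ring

lemma continuous_z1 : Continuous z1 := continuous_fst.comp (continuous_induced_dom (f := toProd))

lemma continuous_z2 : Continuous z2 := continuous_snd.comp (continuous_induced_dom (f := toProd))

lemma continuous_P1 : Continuous P1 := continuous_z1.sub (continuous_z2.mul continuous_const)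

lemma continuous_P2 : Continuous P2 := continuous_z1.add (continuous_z2.mul continuous_const)

lemma tendsto_nhds_iff_P1_P2 {α : Type*} {f : α → Bicomplex} {l : Filter α} {d : Bicomplex} :
    Tendsto f l (𝓝 d) ↔
      Tendsto (fun x => P1 (f x)) l (𝓝 (P1 d)) ∧ Tendsto (fun x => P2 (f x)) l (𝓝 (P2 d)) := by
  refine ⟨fun h => ⟨(continuous_P1.tendsto d).comp h, (continuous_P2.tendsto d).comp h⟩,
    fun ⟨h1, h2⟩ => ?_⟩
  rw [nhds_induced, tendsto_comap_iff]
  refine Tendsto.prodMk_nhds ?_ ?_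
  · change Tendsto (fun x => (f x).z1) l (𝓝 d.z1)
    simp only [z1_eq_P1_add_P2]
    exact (h1.add h2).div_const 2
  · change Tendsto (fun x => (f x).z2) l (𝓝 d.z2)
    simp only [z2_eq_P2_sub_P1]
    exact (h2.sub h1).div_const _

lemma tendsto_P1_nhdsWithin_invertibleDiff (ω₀ : Bicomplex) :
    Tendsto P1 (𝓝[invertibleDiff ω₀] ω₀) (𝓝[≠] (P1 ω₀)) :=
  tendsto_nhdsWithin_iff.2 ⟨continuous_P1.continuousWithinAt.tendsto,
    eventually_nhdsWithin_of_forall fun _ hω => (mem_invertibleDiff_iff.1 hω).1⟩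

lemma tendsto_P2_nhdsWithin_invertibleDiff (ω₀ : Bicomplex) :
    Tendsto P2 (𝓝[invertibleDiff ω₀] ω₀) (𝓝[≠] (P2 ω₀)) :=
  tendsto_nhdsWithin_iff.2 ⟨continuous_P2.continuousWithinAt.tendsto,
    eventually_nhdsWithin_of_forall fun _ hω => (mem_invertibleDiff_iff.1 hω).2⟩

lemma P1_ofHyp (a : ℝ × ℝ) : P1 (ofHyp a) = ↑(a.1 + a.2) := by
  simp only [P1, ofHyp]; push_cast; ring_nf; rw [I_sq]; ring

lemma P2_ofHyp (a : ℝ × ℝ) : P2 (ofHyp a) = ↑(a.1 - a.2) := by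
  simp only [P2, ofHyp]; push_cast; ring_nf; rw [I_sq]; ring

lemma ofHyp_neg (a : ℝ × ℝ) : ofHyp (-a) = -ofHyp a := by
  ext <;> simp [ofHyp]

lemma vec3_fst_add_snd (v : Bicomplex) : (vec3 v).1 + (vec3 v).2 = (P1 v).im := by
  simp [vec3, P1, sub_eq_add_neg]

lemma vec3_fst_sub_snd (v : Bicomplex) : (vec3 v).1 - (vec3 v).2 = (P2 v).im := by
  simp [vec3, P2, sub_eq_add_neg]

lemma hdiv_fst_add_snd (a : ℝ × ℝ) {b : ℝ × ℝ} (h₁ : b.1 + b.2 ≠ 0) (h₂ : b.1 - b.2 ≠ 0) :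
    (hdiv a b).1 + (hdiv a b).2 = (a.1 + a.2) / (b.1 + b.2) := by
  have hb : b.1 ^ 2 - b.2 ^ 2 = (b.1 + b.2) * (b.1 - b.2) := by ring
  simp only [hdiv, hmul, hb]
  field_simp
  ring

lemma hdiv_fst_sub_snd (a : ℝ × ℝ) {b : ℝ × ℝ} (h₁ : b.1 + b.2 ≠ 0) (h₂ : b.1 - b.2 ≠ 0) :
    (hdiv a b).1 - (hdiv a b).2 = (a.1 - a.2) / (b.1 - b.2) := by
  have hb : b.1 ^ 2 - b.2 ^ 2 = (b.1 + b.2) * (b.1 - b.2) := by ring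
  simp only [hdiv, hmul, hb]
  field_simp
  ring

lemma P1_ofHyp_hdiv_vec3 (u : Bicomplex) {v : Bicomplex} (h₁ : (P1 v).im ≠ 0)
    (h₂ : (P2 v).im ≠ 0) : P1 (ofHyp (hdiv (vec3 u) (vec3 v))) = ↑((P1 u).im / (P1 v).im) := by
  rw [← vec3_fst_add_snd] at h₁
  rw [← vec3_fst_sub_snd] at h₂
  rw [P1_ofHyp, hdiv_fst_add_snd _ h₁ h₂, vec3_fst_add_snd, vec3_fst_add_snd]

lemma P2_ofHyp_hdiv_vec3 (u : Bicomplex) {v : Bicomplex} (h₁ : (P1 v).im ≠ 0)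
    (h₂ : (P2 v).im ≠ 0) : P2 (ofHyp (hdiv (vec3 u) (vec3 v))) = ↑((P2 u).im / (P2 v).im) := by
  rw [← vec3_fst_add_snd] at h₁
  rw [← vec3_fst_sub_snd] at h₂
  rw [P2_ofHyp, hdiv_fst_sub_snd _ h₁ h₂, vec3_fst_sub_snd, vec3_fst_sub_snd]

def IsIdempotentLift (f : Bicomplex → Bicomplex) (f₁ f₂ : ℂ → ℂ) : Prop :=
  ∀ ω, f ω = ofComplex (f₁ (P1 ω)) * e1 + ofComplex (f₂ (P2 ω)) * e2

section IsIdempotentLift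

variable {F G w : Bicomplex → Bicomplex} {Fe1 Ge1 we1 Fe2 Ge2 we2 : ℂ → ℂ}

lemma IsIdempotentLift.P1_apply {f : Bicomplex → Bicomplex} {f₁ f₂ : ℂ → ℂ}
    (hf : IsIdempotentLift f f₁ f₂) (ω : Bicomplex) : P1 (f ω) = f₁ (P1 ω) := by
  rw [hf, P1_idempotent_decomp]

lemma IsIdempotentLift.P2_apply {f : Bicomplex → Bicomplex} {f₁ f₂ : ℂ → ℂ}
    (hf : IsIdempotentLift f f₁ f₂) (ω : Bicomplex) : P2 (f ω) = f₂ (P2 ω) := by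
  rw [hf, P2_idempotent_decomp]

lemma IsIdempotentLift.P1_dag3_mul (hF : IsIdempotentLift F Fe1 Fe2)
    (hG : IsIdempotentLift G Ge1 Ge2) (ω : Bicomplex) :
    P1 (dag3 (F ω) * G ω) = starRingEnd ℂ (Fe1 (P1 ω)) * Ge1 (P1 ω) := by
  rw [P1_mul, P1_dag3, hF.P1_apply, hG.P1_apply]

lemma IsIdempotentLift.P2_dag3_mul (hF : IsIdempotentLift F Fe1 Fe2)
    (hG : IsIdempotentLift G Ge1 Ge2) (ω : Bicomplex) :
    P2 (dag3 (F ω) * G ω) = starRingEnd ℂ (Fe2 (P2 ω)) * Ge2 (P2 ω) := by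
  rw [P2_mul, P2_dag3, hF.P2_apply, hG.P2_apply]

lemma P1_ofHyp_lamJ (hF : IsIdempotentLift F Fe1 Fe2) (hG : IsIdempotentLift G Ge1 Ge2)
    (hw : IsIdempotentLift w we1 we2) {ω₀ : Bicomplex}
    (h₁ : (starRingEnd ℂ (Fe1 (P1 ω₀)) * Ge1 (P1 ω₀)).im ≠ 0)
    (h₂ : (starRingEnd ℂ (Fe2 (P2 ω₀)) * Ge2 (P2 ω₀)).im ≠ 0) :
    P1 (ofHyp (lamJ F G w ω₀)) = lamBers Fe1 Ge1 we1 (P1 ω₀) := by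
  rw [lamJ, P1_ofHyp_hdiv_vec3 _ (by rwa [hF.P1_dag3_mul hG]) (by rwa [hF.P2_dag3_mul hG]),
    hw.P1_dag3_mul hG, hF.P1_dag3_mul hG, lamBers]

lemma P2_ofHyp_lamJ (hF : IsIdempotentLift F Fe1 Fe2) (hG : IsIdempotentLift G Ge1 Ge2)
    (hw : IsIdempotentLift w we1 we2) {ω₀ : Bicomplex}
    (h₁ : (starRingEnd ℂ (Fe1 (P1 ω₀)) * Ge1 (P1 ω₀)).im ≠ 0)
    (h₂ : (starRingEnd ℂ (Fe2 (P2 ω₀)) * Ge2 (P2 ω₀)).im ≠ 0) :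
    P2 (ofHyp (lamJ F G w ω₀)) = lamBers Fe2 Ge2 we2 (P2 ω₀) := by
  rw [lamJ, P2_ofHyp_hdiv_vec3 _ (by rwa [hF.P1_dag3_mul hG]) (by rwa [hF.P2_dag3_mul hG]),
    hw.P2_dag3_mul hG, hF.P2_dag3_mul hG, lamBers]

lemma P1_ofHyp_muJ (hF : IsIdempotentLift F Fe1 Fe2) (hG : IsIdempotentLift G Ge1 Ge2)
    (hw : IsIdempotentLift w we1 we2) {ω₀ : Bicomplex}
    (h₁ : (starRingEnd ℂ (Fe1 (P1 ω₀)) * Ge1 (P1 ω₀)).im ≠ 0)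
    (h₂ : (starRingEnd ℂ (Fe2 (P2 ω₀)) * Ge2 (P2 ω₀)).im ≠ 0) :
    P1 (ofHyp (muJ F G w ω₀)) = muBers Fe1 Ge1 we1 (P1 ω₀) := by
  rw [muJ, ofHyp_neg, P1_neg,
    P1_ofHyp_hdiv_vec3 _ (by rwa [hF.P1_dag3_mul hG]) (by rwa [hF.P2_dag3_mul hG]),
    hw.P1_dag3_mul hF, hF.P1_dag3_mul hG, muBers, Complex.ofReal_neg]

lemma P2_ofHyp_muJ (hF : IsIdempotentLift F Fe1 Fe2) (hG : IsIdempotentLift G Ge1 Ge2)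
    (hw : IsIdempotentLift w we1 we2) {ω₀ : Bicomplex}
    (h₁ : (starRingEnd ℂ (Fe1 (P1 ω₀)) * Ge1 (P1 ω₀)).im ≠ 0)
    (h₂ : (starRingEnd ℂ (Fe2 (P2 ω₀)) * Ge2 (P2 ω₀)).im ≠ 0) :
    P2 (ofHyp (muJ F G w ω₀)) = muBers Fe2 Ge2 we2 (P2 ω₀) := by
  rw [muJ, ofHyp_neg, P2_neg,
    P2_ofHyp_hdiv_vec3 _ (by rwa [hF.P1_dag3_mul hG]) (by rwa [hF.P2_dag3_mul hG]),
    hw.P2_dag3_mul hF, hF.P2_dag3_mul hG, muBers, Complex.ofReal_neg]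

theorem hasFGDerivJ_of_hasBersDerivAt (hF : IsIdempotentLift F Fe1 Fe2)
    (hG : IsIdempotentLift G Ge1 Ge2) (hw : IsIdempotentLift w we1 we2) {ω₀ : Bicomplex}
    (h₁ : (starRingEnd ℂ (Fe1 (P1 ω₀)) * Ge1 (P1 ω₀)).im ≠ 0)
    (h₂ : (starRingEnd ℂ (Fe2 (P2 ω₀)) * Ge2 (P2 ω₀)).im ≠ 0) {d₁ d₂ : ℂ}
    (hd₁ : HasBersDerivAt Fe1 Ge1 we1 d₁ (P1 ω₀)) (hd₂ : HasBersDerivAt Fe2 Ge2 we2 d₂ (P2 ω₀)) :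
    HasFGDerivJ F G w (ofComplex d₁ * e1 + ofComplex d₂ * e2) ω₀ := by
  rw [HasFGDerivJ, tendsto_nhds_iff_P1_P2, P1_idempotent_decomp, P2_idempotent_decomp]
  constructor
  · refine (hd₁.comp (tendsto_P1_nhdsWithin_invertibleDiff ω₀)).congr' ?_
    filter_upwards [self_mem_nhdsWithin] with ω hω
    simp only [Function.comp_apply, P1_div _ hω, P1_sub, P1_mul, hw.P1_apply, hF.P1_apply,
      hG.P1_apply, P1_ofHyp_lamJ hF hG hw h₁ h₂, P1_ofHyp_muJ hF hG hw h₁ h₂]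
  · refine (hd₂.comp (tendsto_P2_nhdsWithin_invertibleDiff ω₀)).congr' ?_
    filter_upwards [self_mem_nhdsWithin] with ω hω
    simp only [Function.comp_apply, P2_div _ hω, P2_sub, P2_mul, hw.P2_apply, hF.P2_apply,
      hG.P2_apply, P2_ofHyp_lamJ hF hG hw h₁ h₂, P2_ofHyp_muJ hF hG hw h₁ h₂]

end IsIdempotentLift

end Bicomplex

theorem pseudoanalyticJ_of_Bers_components_general (D₁ D₂ : Set ℂ)
    (Fe1 Ge1 Fe2 Ge2 : ℂ → ℂ) (F G : Bicomplex → Bicomplex)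
    (hFG : I2eGenPair Fe1 Ge1 Fe2 Ge2 D₁ D₂ F G)
    (we1 we2 : ℂ → ℂ)
    (hwe1 : BersPseudoanalyticOn Fe1 Ge1 we1 D₁)
    (hwe2 : BersPseudoanalyticOn Fe2 Ge2 we2 D₂)
    (w : Bicomplex → Bicomplex)
    (hw : ∀ ω : Bicomplex, w ω = ofComplex (we1 (P1 ω)) * e1 + ofComplex (we2 (P2 ω)) * e2) :
    PseudoanalyticJ F G w (eProd D₁ D₂) ∧
    ∀ ω ∈ eProd D₁ D₂, ∃ d1 d2 : ℂ,
      HasBersDerivAt Fe1 Ge1 we1 d1 (P1 ω) ∧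
      HasBersDerivAt Fe2 Ge2 we2 d2 (P2 ω) ∧
      HasFGDerivJ F G w (ofComplex d1 * e1 + ofComplex d2 * e2) ω := by
  obtain ⟨⟨-, -, hFG₁⟩, ⟨-, -, hFG₂⟩, hF, hG⟩ := hFG
  have hderiv : ∀ ω ∈ eProd D₁ D₂, ∃ d1 d2 : ℂ,
      HasBersDerivAt Fe1 Ge1 we1 d1 (P1 ω) ∧
      HasBersDerivAt Fe2 Ge2 we2 d2 (P2 ω) ∧
      HasFGDerivJ F G w (ofComplex d1 * e1 + ofComplex d2 * e2) ω := by
    rintro ω ⟨hω₁, hω₂⟩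
    obtain ⟨d1, hd1⟩ := hwe1 _ hω₁
    obtain ⟨d2, hd2⟩ := hwe2 _ hω₂
    exact ⟨d1, d2, hd1, hd2,
      hasFGDerivJ_of_hasBersDerivAt hF hG hw (hFG₁ _ hω₁) (hFG₂ _ hω₂) hd1 hd2⟩
  refine ⟨fun ω hω => ?_, hderiv⟩
  obtain ⟨d1, d2, -, -, h⟩ := hderiv ω hω
  exact ⟨_, h⟩

/-- If `w_{e1}` is `(F_{e1}, G_{e1})`-pseudoanalytic on `D₁` and `w_{e2}` is
`(F_{e2}, G_{e2})`-pseudoanalytic on `D₂`, then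
`w(z₁ + z₂i₂) = w_{e1}(z₁ - z₂i₁)e₁ + w_{e2}(z₁ + z₂i₁)e₂` is `(F,G)_j`-pseudoanalytic on
`D₁ ×ₑ D₂` and `ẇ = ẇ_{e1}(z₁ - z₂i₁)e₁ + ẇ_{e2}(z₁ + z₂i₁)e₂` there. -/
theorem pseudoanalyticJ_of_Bers_components (D₁ D₂ : Set ℂ)
    (hD₁ : IsOpen D₁) (hD₂ : IsOpen D₂) (hcD₁ : IsConnected D₁) (hcD₂ : IsConnected D₂)
    (Fe1 Ge1 Fe2 Ge2 : ℂ → ℂ) (F G : Bicomplex → Bicomplex)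
    (hFG : I2eGenPair Fe1 Ge1 Fe2 Ge2 D₁ D₂ F G)
    (we1 we2 : ℂ → ℂ)
    (hwe1 : BersPseudoanalyticOn Fe1 Ge1 we1 D₁)
    (hwe2 : BersPseudoanalyticOn Fe2 Ge2 we2 D₂)
    (w : Bicomplex → Bicomplex)
    (hw : ∀ ω : Bicomplex, w ω = ofComplex (we1 (P1 ω)) * e1 + ofComplex (we2 (P2 ω)) * e2) :
    PseudoanalyticJ F G w (eProd D₁ D₂) ∧
    ∀ ω ∈ eProd D₁ D₂, ∃ d1 d2 : ℂ,
      HasBersDerivAt Fe1 Ge1 we1 d1 (P1 ω) ∧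
      HasBersDerivAt Fe2 Ge2 we2 d2 (P2 ω) ∧
      HasFGDerivJ F G w (ofComplex d1 * e1 + ofComplex d2 * e2) ω :=
  pseudoanalyticJ_of_Bers_components_general D₁ D₂ Fe1 Ge1 Fe2 Ge2 F G hFG we1 we2 hwe1 hwe2 w hw
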